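/- arXiv:1811.03675 — 11 statements merged into one kernel-verified Lean document; each statement's English description precedes it below -/
import Mathlib

section
/- Let L be a field, n ≥ 2, and let u, v, δ ∈ L satisfy u(δ+1)² − (v−1)(δ+1) − 1 = 0. Then there is an isomorphism of L-algebras from the one-parameter bt-algebra E_n(u(δ+1)²) (i.e. E_n(u(δ+1)², u(δ+1)²)) onto the two-parameter bt-algebra E_n(u,v), sending the i-th braid generator T_i to R_i + δ E_i R_i and the i-th tie generator to E_i, for all i = 1, …, n−1. -/
/-! The two-parameter bt-algebra `E_n(x,y)`, presented by braid generators
`R_1, …, R_{n−1}` and tie generators `E_1, …, E_{n−1}` (indexed here by `Fin (n-1)`),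
as the quotient of the free unital associative algebra by the defining relations. -/

/-- Generators of the bt-algebra: `R i` are the braid generators, `E i` the tie
generators. -/
inductive BtGen (n : ℕ) : Type
  | R : Fin (n - 1) → BtGen n
  | E : Fin (n - 1) → BtGen n

/-- The braid generator `R_i` in the free algebra. -/
noncomputable def btr (L : Type) [Field L] (n : ℕ) (i : Fin (n - 1)) :
    FreeAlgebra L (BtGen n) :=
  FreeAlgebra.ι L (BtGen.R i)

/-- The tie generator `E_i` in the free algebra. -/
noncomputable def bte (L : Type) [Field L] (n : ℕ) (i : Fin (n - 1)) :
    FreeAlgebra L (BtGen n) :=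
  FreeAlgebra.ι L (BtGen.E i)

/-- The defining relations of the two-parameter bt-algebra `E_n(x,y)`. -/
inductive BtRel (L : Type) [Field L] (x y : L) (n : ℕ) :
    FreeAlgebra L (BtGen n) → FreeAlgebra L (BtGen n) → Prop
  | comm_ee (i j : Fin (n - 1)) :
      BtRel L x y n (bte L n i * bte L n j) (bte L n j * bte L n i)
  | idem_e (i : Fin (n - 1)) :
      BtRel L x y n (bte L n i * bte L n i) (bte L n i)
  | comm_er_far (i j : Fin (n - 1)) (h : Nat.dist i.val j.val > 1) :
      BtRel L x y n (bte L n i * btr L n j) (btr L n j * bte L n i)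
  | comm_er (i : Fin (n - 1)) :
      BtRel L x y n (bte L n i * btr L n i) (btr L n i * bte L n i)
  | err (i j : Fin (n - 1)) (h : Nat.dist i.val j.val = 1) :
      BtRel L x y n (bte L n i * (btr L n j * btr L n i))
        (btr L n j * btr L n i * bte L n i)
  | eer₁ (i j : Fin (n - 1)) (h : Nat.dist i.val j.val = 1) :
      BtRel L x y n (bte L n i * bte L n j * btr L n i)
        (bte L n j * btr L n i * bte L n j)
  | eer₂ (i j : Fin (n - 1)) (h : Nat.dist i.val j.val = 1) :
      BtRel L x y n (bte L n j * btr L n i * bte L n j)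
        (btr L n i * (bte L n i * bte L n j))
  | comm_rr (i j : Fin (n - 1)) (h : Nat.dist i.val j.val > 1) :
      BtRel L x y n (btr L n i * btr L n j) (btr L n j * btr L n i)
  | braid (i j : Fin (n - 1)) (h : Nat.dist i.val j.val = 1) :
      BtRel L x y n (btr L n i * btr L n j * btr L n i)
        (btr L n j * btr L n i * btr L n j)
  | quad (i : Fin (n - 1)) :
      BtRel L x y n (btr L n i * btr L n i)
        (1 + (x - 1) • bte L n i + (y - 1) • (bte L n i * btr L n i))

/-- The two-parameter bt-algebra `E_n(x,y)`. -/
noncomputable abbrev BtAlgebra (L : Type) [Field L] (x y : L) (n : ℕ) : Type :=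
  RingQuot (BtRel L x y n)

/-- The braid generator `R_i` of `E_n(x,y)`. -/
noncomputable def BtAlgebra.R (L : Type) [Field L] (x y : L) (n : ℕ)
    (i : Fin (n - 1)) : BtAlgebra L x y n :=
  RingQuot.mkAlgHom L (BtRel L x y n) (btr L n i)

/-- The tie generator `E_i` of `E_n(x,y)`. -/
noncomputable def BtAlgebra.E (L : Type) [Field L] (x y : L) (n : ℕ)
    (i : Fin (n - 1)) : BtAlgebra L x y n :=
  RingQuot.mkAlgHom L (BtRel L x y n) (bte L n i)

/-! The substitution `T_i = (1 + δ E_i) R_i` carries any family satisfying the relations of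
`E_n(x,y)` to one satisfying those of `E_n(x(δ+1)², (y-1)(δ+1)+1)`. It is invertible when
`δ + 1 ≠ 0`: as `E_i` is an idempotent commuting with `R_i`,
`(1 + δ E_i)(1 + δ' E_i) = 1 + ((1 + δ)(1 + δ') - 1) E_i`, so `δ' = (1 + δ)⁻¹ - 1` undoes it.
The only delicate relation is the braid relation: for adjacent `i, j` both sides become
`R_iR_jR_i (1 + ((1+δ)³ - 1) E_i)`, because the tie relations make every word `R_iR_jR_i` with
ties inserted collapse to `R_iR_jR_iE_i`. The hypothesis says `u(δ+1)² = (v-1)(δ+1)+1`, so the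
substitution lands in the one-parameter algebra; it also rules out `δ = -1`. -/

section IdempotentDeform

variable {L A : Type*} [CommRing L] [Ring A] [Algebra L A]

theorem IsIdempotentElem.one_add_smul_mul_one_add_smul {e : A} (he : IsIdempotentElem e)
    (c d : L) : (1 + c • e) * (1 + d • e) = 1 + ((1 + c) * (1 + d) - 1) • e := by
  simp only [mul_add, add_mul, one_mul, mul_one, smul_mul_smul_comm, he.eq]
  module

theorem IsIdempotentElem.mul_one_add_smul {e : A} (he : IsIdempotentElem e) (c : L) :
    e * (1 + c • e) = (1 + c) • e := by
  rw [mul_add, mul_one, mul_smul_comm, he.eq, add_smul, one_smul]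

theorem IsIdempotentElem.one_add_smul_mul_cancel {e : A} (he : IsIdempotentElem e) {c d : L}
    (hcd : (1 + c) * (1 + d) = 1) (a : A) : (1 + c • e) * ((1 + d • e) * a) = a := by
  rw [← mul_assoc, he.one_add_smul_mul_one_add_smul, hcd, sub_self, zero_smul, add_zero, one_mul]

theorem Commute.one_add_smul_left {e b : A} (h : Commute e b) (c : L) :
    Commute (1 + c • e) b :=
  (Commute.one_left b).add_left (h.smul_left c)

end IdempotentDeform

structure BtRelations {L : Type*} [CommRing L] (x y : L) (n : ℕ) {A : Type*} [Ring A]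
    [Algebra L A] (r e : Fin (n - 1) → A) : Prop where
  comm_ee : ∀ i j, Commute (e i) (e j)
  idem : ∀ i, IsIdempotentElem (e i)
  comm_er_far : ∀ i j, Nat.dist i.val j.val > 1 → Commute (e i) (r j)
  comm_er : ∀ i, Commute (e i) (r i)
  err : ∀ i j, Nat.dist i.val j.val = 1 → Commute (e i) (r j * r i)
  eer₁ : ∀ i j, Nat.dist i.val j.val = 1 → e i * e j * r i = e j * r i * e j
  eer₂ : ∀ i j, Nat.dist i.val j.val = 1 → e j * r i * e j = r i * (e i * e j)
  comm_rr : ∀ i j, Nat.dist i.val j.val > 1 → Commute (r i) (r j)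
  braid : ∀ i j, Nat.dist i.val j.val = 1 → r i * r j * r i = r j * r i * r j
  quad : ∀ i, r i * r i = 1 + (x - 1) • e i + (y - 1) • (e i * r i)

namespace BtRelations

variable {L A : Type*} [CommRing L] [Ring A] [Algebra L A] {x y : L} {n : ℕ}
  {r e : Fin (n - 1) → A} {i j : Fin (n - 1)}

theorem commute_tie_braid (h : BtRelations x y n r e) (hij : Nat.dist i.val j.val = 1) :
    Commute (e i) (r i * r j * r i) := by
  rw [mul_assoc]
  exact (h.comm_er i).mul_right (h.err i j hij)

theorem commute_tie_braid' (h : BtRelations x y n r e) (hij : Nat.dist i.val j.val = 1) :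
    Commute (e j) (r i * r j * r i) := by
  rw [h.braid i j hij]
  exact h.commute_tie_braid (by rwa [Nat.dist_comm])

theorem mul_mul_tie_mul_tie (h : BtRelations x y n r e) (hij : Nat.dist i.val j.val = 1) :
    r j * r i * e i * e j = r j * r i * e i := by
  have hji : Nat.dist j.val i.val = 1 := by rwa [Nat.dist_comm]
  calc r j * r i * e i * e j = r j * (r i * (e i * e j)) := by simp only [mul_assoc]
    _ = r j * (e j * e i) * r i := by
        rw [← h.eer₂ i j hij, ← h.eer₁ i j hij, (h.comm_ee i j).eq, ← mul_assoc]
    _ = e i * r j * e i * r i := by rw [h.eer₂ j i hji]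
    _ = e i * (r j * r i) * e i := by
        rw [mul_assoc (e i * r j), (h.comm_er i).eq]
        simp only [mul_assoc]
    _ = r j * r i * e i := by rw [(h.err i j hij).eq, mul_assoc, (h.idem i).eq]

theorem braid_mul_tie (h : BtRelations x y n r e) (hij : Nat.dist i.val j.val = 1) :
    r i * r j * r i * e j = r i * r j * r i * e i := by
  have hji : Nat.dist j.val i.val = 1 := by rwa [Nat.dist_comm]
  calc r i * r j * r i * e j = e j * (r i * r j * r i) * e j := by
        rw [(h.commute_tie_braid' hij).eq, mul_assoc (r i * r j * r i), (h.idem j).eq]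
    _ = r i * r j * (e j * r i * e j) := by
        rw [← mul_assoc (e j) (r i * r j), (h.err j i hji).eq]
        simp only [mul_assoc]
    _ = r i * (r j * r i * e i * e j) := by
        rw [h.eer₂ i j hij]
        simp only [mul_assoc]
    _ = r i * r j * r i * e i := by
        rw [h.mul_mul_tie_mul_tie hij]
        simp only [mul_assoc]

theorem mul_tie_mul_mul (h : BtRelations x y n r e) (hij : Nat.dist i.val j.val = 1) :
    r i * e j * r j * r i = r i * r j * r i * e i := by
  have hji : Nat.dist j.val i.val = 1 := by rwa [Nat.dist_comm]
  calc r i * e j * r j * r i = e j * (r i * r j) * r i := by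
        rw [mul_assoc (r i), (h.comm_er j).eq, ← mul_assoc, ← (h.err j i hji).eq]
    _ = r i * r j * r i * e i := by
        rw [mul_assoc, (h.commute_tie_braid' hij).eq, h.braid_mul_tie hij]

theorem mul_one_add_smul_tie_mul_mul (h : BtRelations x y n r e)
    (hij : Nat.dist i.val j.val = 1) (δ : L) :
    r i * (1 + δ • e j) * r j * r i = r i * r j * r i * (1 + δ • e i) := by
  simp only [mul_add, add_mul, mul_one, mul_smul_comm, smul_mul_assoc, h.mul_tie_mul_mul hij]

theorem deform_braid_eq (h : BtRelations x y n r e) (hij : Nat.dist i.val j.val = 1) (δ : L) :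
    (1 + δ • e i) * r i * ((1 + δ • e j) * r j) * ((1 + δ • e i) * r i) =
      r i * r j * r i * (1 + ((1 + δ) ^ 3 - 1) • e i) := by
  have hpr : Commute (1 + δ • e i) (r i) := (h.comm_er i).one_add_smul_left δ
  have hpw : Commute (1 + δ • e i) (r i * r j * r i) :=
    (h.commute_tie_braid hij).one_add_smul_left δ
  calc (1 + δ • e i) * r i * ((1 + δ • e j) * r j) * ((1 + δ • e i) * r i)
      = (1 + δ • e i) * (r i * (1 + δ • e j) * r j * r i) * (1 + δ • e i) := by
        nth_rw 2 [hpr.eq]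
        simp only [mul_assoc]
    _ = r i * r j * r i * ((1 + δ • e i) * (1 + δ • e i) * (1 + δ • e i)) := by
        rw [h.mul_one_add_smul_tie_mul_mul hij, ← mul_assoc (1 + δ • e i), hpw.eq]
        simp only [mul_assoc]
    _ = r i * r j * r i * (1 + ((1 + δ) ^ 3 - 1) • e i) := by
        rw [(h.idem i).one_add_smul_mul_one_add_smul, (h.idem i).one_add_smul_mul_one_add_smul]
        congr 3
        ring

theorem deform_quad (h : BtRelations x y n r e) (i : Fin (n - 1)) (δ : L) :
    (1 + δ • e i) * r i * ((1 + δ • e i) * r i) =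
      1 + (x * (δ + 1) ^ 2 - 1) • e i +
        ((y - 1) * (δ + 1) + 1 - 1) • (e i * ((1 + δ • e i) * r i)) := by
  have hpr : Commute (1 + δ • e i) (r i) := (h.comm_er i).one_add_smul_left δ
  have hsq : (1 + δ • e i) * r i * ((1 + δ • e i) * r i) =
      (1 + δ • e i) * (1 + δ • e i) * (r i * r i) := by
    rw [mul_assoc, ← mul_assoc (r i), ← hpr.eq]
    simp only [mul_assoc]
  rw [hsq, h.quad i, (h.idem i).one_add_smul_mul_one_add_smul, ← mul_assoc,
    (h.idem i).mul_one_add_smul]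
  simp only [mul_add, add_mul, one_mul, mul_one, smul_mul_assoc, mul_smul_comm, ← mul_assoc,
    (h.idem i).eq]
  module

theorem deform (h : BtRelations x y n r e) (δ : L) {x' y' : L} (hx : x' = x * (δ + 1) ^ 2)
    (hy : y' = (y - 1) * (δ + 1) + 1) :
    BtRelations x' y' n (fun i => (1 + δ • e i) * r i) e := by
  subst hx hy
  have hpe : ∀ i j, Commute (1 + δ • e i) (e j) := fun i j => (h.comm_ee i j).one_add_smul_left δ
  have hpr : ∀ i, Commute (1 + δ • e i) (r i) := fun i => (h.comm_er i).one_add_smul_left δ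
  constructor
  case comm_ee => exact h.comm_ee
  case idem => exact h.idem
  case comm_er_far => exact fun i j hij => (hpe j i).symm.mul_right (h.comm_er_far i j hij)
  case comm_er => exact fun i => (hpe i i).symm.mul_right (h.comm_er i)
  case err =>
    intro i j hij
    rw [(hpr i).eq, ← mul_assoc, mul_assoc (1 + δ • e j) (r j)]
    exact ((hpe j i).symm.mul_right (h.err i j hij)).mul_right (hpe i i).symm
  case eer₁ =>
    intro i j hij
    rw [((hpe i i).mul_right (hpe i j)).symm.left_comm, (hpe i j).symm.left_comm, h.eer₁ i j hij,
      mul_assoc (1 + δ • e i)]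
  case eer₂ =>
    intro i j hij
    rw [(hpe i j).symm.left_comm, mul_assoc (1 + δ • e i), h.eer₂ i j hij, mul_assoc]
  case comm_rr =>
    intro i j hij
    have hji : Nat.dist j.val i.val > 1 := by rwa [Nat.dist_comm]
    have hpp : Commute (1 + δ • e i) (1 + δ • e j) := ((hpe i j).symm.one_add_smul_left δ).symm
    exact (hpp.mul_right ((h.comm_er_far i j hij).one_add_smul_left δ)).mul_left
      (((h.comm_er_far j i hji).one_add_smul_left δ).symm.mul_right (h.comm_rr i j hij))
  case braid =>
    intro i j hij
    have hji : Nat.dist j.val i.val = 1 := by rwa [Nat.dist_comm]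
    rw [h.deform_braid_eq hij, h.deform_braid_eq hji, h.braid i j hij]
    simp only [mul_add, mul_smul_comm, h.braid_mul_tie hji]
  case quad => exact fun i => h.deform_quad i δ

end BtRelations

def BtGen.elim {n : ℕ} {A : Type*} (r e : Fin (n - 1) → A) : BtGen n → A
  | .R i => r i
  | .E i => e i

namespace BtAlgebra

variable {L : Type} [Field L] {x y : L} {n : ℕ} {A : Type*} [Ring A] [Algebra L A]
  {r e : Fin (n - 1) → A}

theorem lift_rel (h : BtRelations x y n r e) ⦃w₁ w₂ : FreeAlgebra L (BtGen n)⦄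
    (hw : BtRel L x y n w₁ w₂) :
    FreeAlgebra.lift L (BtGen.elim r e) w₁ = FreeAlgebra.lift L (BtGen.elim r e) w₂ := by
  induction hw <;>
    simp only [btr, bte, map_mul, map_add, map_one, map_smul, FreeAlgebra.lift_ι_apply,
      BtGen.elim]
  exacts [(h.comm_ee _ _).eq, (h.idem _).eq, (h.comm_er_far _ _ ‹_›).eq, (h.comm_er _).eq,
    (h.err _ _ ‹_›).eq, h.eer₁ _ _ ‹_›, h.eer₂ _ _ ‹_›, (h.comm_rr _ _ ‹_›).eq, h.braid _ _ ‹_›,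
    h.quad _]

noncomputable def lift (h : BtRelations x y n r e) : BtAlgebra L x y n →ₐ[L] A :=
  RingQuot.liftAlgHom L ⟨FreeAlgebra.lift L (BtGen.elim r e), lift_rel h⟩

@[simp]
theorem lift_R (h : BtRelations x y n r e) (i : Fin (n - 1)) : lift h (R L x y n i) = r i := by
  simp only [lift, R, btr, RingQuot.liftAlgHom_mkAlgHom_apply, FreeAlgebra.lift_ι_apply,
    BtGen.elim]

@[simp]
theorem lift_E (h : BtRelations x y n r e) (i : Fin (n - 1)) : lift h (E L x y n i) = e i := by
  simp only [lift, E, bte, RingQuot.liftAlgHom_mkAlgHom_apply, FreeAlgebra.lift_ι_apply,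
    BtGen.elim]

theorem relations : BtRelations x y n (R L x y n) (E L x y n) := by
  have mk_rel := fun {w₁ w₂} (hw : BtRel L x y n w₁ w₂) => RingQuot.mkAlgHom_rel L hw
  constructor <;> intros <;>
    simp only [R, E, commute_iff_eq, isIdempotentElem_iff, ← map_mul]
  exacts [mk_rel (.comm_ee _ _), mk_rel (.idem_e _), mk_rel (.comm_er_far _ _ ‹_›),
    mk_rel (.comm_er _), mk_rel (.err _ _ ‹_›), mk_rel (.eer₁ _ _ ‹_›), mk_rel (.eer₂ _ _ ‹_›),
    mk_rel (.comm_rr _ _ ‹_›), mk_rel (.braid _ _ ‹_›),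
    by simpa only [map_mul, map_add, map_one, map_smul] using mk_rel (.quad _)]

theorem algHom_ext {f g : BtAlgebra L x y n →ₐ[L] A}
    (hR : ∀ i, f (R L x y n i) = g (R L x y n i))
    (hE : ∀ i, f (E L x y n i) = g (E L x y n i)) : f = g := by
  refine RingQuot.ringQuot_ext' L f g (FreeAlgebra.hom_ext (funext fun g => ?_))
  cases g
  exacts [hR _, hE _]

noncomputable def deformEquiv {x' y' δ : L} (hδ : δ + 1 ≠ 0) (hx : x' = x * (δ + 1) ^ 2)
    (hy : y' = (y - 1) * (δ + 1) + 1) : BtAlgebra L x' y' n ≃ₐ[L] BtAlgebra L x y n :=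
  have hδδ' : (1 + δ) * (1 + ((δ + 1)⁻¹ - 1)) = 1 := by
    rw [add_sub_cancel, add_comm, mul_inv_cancel₀ hδ]
  have hδ'δ : (1 + ((δ + 1)⁻¹ - 1)) * (1 + δ) = 1 := by rw [mul_comm, hδδ']
  AlgEquiv.ofAlgHom (lift (relations.deform δ hx hy))
    (lift (relations.deform ((δ + 1)⁻¹ - 1) (by rw [hx, sub_add_cancel]; field_simp)
      (by rw [hy, sub_add_cancel]; field_simp; ring)))
    (algHom_ext (fun i => by simp [(relations.idem i).one_add_smul_mul_cancel hδ'δ])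
      fun i => by simp)
    (algHom_ext (fun i => by simp [(relations.idem i).one_add_smul_mul_cancel hδδ'])
      fun i => by simp)

theorem deformEquiv_R {x' y' δ : L} (hδ : δ + 1 ≠ 0) (hx : x' = x * (δ + 1) ^ 2)
    (hy : y' = (y - 1) * (δ + 1) + 1) (i : Fin (n - 1)) :
    deformEquiv hδ hx hy (R L x' y' n i) = (1 + δ • E L x y n i) * R L x y n i :=
  lift_R _ i

theorem deformEquiv_E {x' y' δ : L} (hδ : δ + 1 ≠ 0) (hx : x' = x * (δ + 1) ^ 2)
    (hy : y' = (y - 1) * (δ + 1) + 1) (i : Fin (n - 1)) :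
    deformEquiv hδ hx hy (E L x' y' n i) = E L x y n i :=
  lift_E _ i

end BtAlgebra

theorem bt_one_param_iso_two_param_general
    (L : Type) [Field L] (n : ℕ) (u v δ : L)
    (hδ : u * (δ + 1)^2 - (v - 1) * (δ + 1) - 1 = 0) :
    ∃ φ : BtAlgebra L (u * (δ + 1)^2) (u * (δ + 1)^2) n ≃ₐ[L] BtAlgebra L u v n,
      (∀ i : Fin (n - 1),
        φ (BtAlgebra.R L (u * (δ + 1)^2) (u * (δ + 1)^2) n i) =
          BtAlgebra.R L u v n i + δ • (BtAlgebra.E L u v n i * BtAlgebra.R L u v n i)) ∧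
      (∀ i : Fin (n - 1),
        φ (BtAlgebra.E L (u * (δ + 1)^2) (u * (δ + 1)^2) n i) = BtAlgebra.E L u v n i) := by
  have hδ1 : δ + 1 ≠ 0 := by
    rintro h0
    simp [h0] at hδ
  have hv : u * (δ + 1) ^ 2 = (v - 1) * (δ + 1) + 1 := by linear_combination hδ
  refine ⟨BtAlgebra.deformEquiv hδ1 rfl hv, fun i => ?_, BtAlgebra.deformEquiv_E hδ1 rfl hv⟩
  rw [BtAlgebra.deformEquiv_R, add_mul, one_mul, smul_mul_assoc]

/-- if `u(δ+1)² − (v−1)(δ+1) − 1 = 0`, then the one-parameter bt-algebra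
`E_n(u(δ+1)²) = E_n(u(δ+1)², u(δ+1)²)` is isomorphic, as an `L`-algebra, to the
two-parameter bt-algebra `E_n(u,v)` via `T_i ↦ R_i + δE_iR_i`, `E_i ↦ E_i`. -/
theorem bt_one_param_iso_two_param
    (L : Type) [Field L] (n : ℕ) (hn : 2 ≤ n) (u v δ : L)
    (hδ : u * (δ + 1)^2 - (v - 1) * (δ + 1) - 1 = 0) :
    ∃ φ : BtAlgebra L (u * (δ + 1)^2) (u * (δ + 1)^2) n ≃ₐ[L] BtAlgebra L u v n,
      (∀ i : Fin (n - 1),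
        φ (BtAlgebra.R L (u * (δ + 1)^2) (u * (δ + 1)^2) n i) =
          BtAlgebra.R L u v n i + δ • (BtAlgebra.E L u v n i * BtAlgebra.R L u v n i)) ∧
      (∀ i : Fin (n - 1),
        φ (BtAlgebra.E L (u * (δ + 1)^2) (u * (δ + 1)^2) n i) = BtAlgebra.E L u v n i) :=
  bt_one_param_iso_two_param_general L n u v δ hδ
end

section
/- Suppose moreover δ ∈ K satisfies u(δ+1)² − (v−1)(δ+1) − 1 = 0, and set T := R + δER. Then T² = 1 + (u(δ+1)² − 1)E + (u(δ+1)² − 1)ET; that is, T satisfies the one-parameter bt-algebra quadratic relation with parameter u(δ+1)². -/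
/-- In an associative unital `K`-algebra `A` with `E² = E`, `ER = RE` and
`R² = 1 + (u−1)E + (v−1)ER`, if `δ` is a root of `u(δ+1)² − (v−1)(δ+1) − 1`, then
`T := R + δER` satisfies the one-parameter bt-algebra quadratic relation with
parameter `u(δ+1)²`. -/
theorem two_param_bt_quadratic_to_one_param
    (K : Type*) [Field K] (u v δ : K)
    (A : Type*) [Ring A] [Algebra K A]
    (E R : A)
    (hE : E * E = E)
    (hER : E * R = R * E)
    (hquad : R * R = 1 + (u - 1) • E + (v - 1) • (E * R))
    (hδ : u * (δ + 1)^2 - (v - 1) * (δ + 1) - 1 = 0) :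
    (R + δ • (E * R)) * (R + δ • (E * R)) =
      1 + (u * (δ + 1)^2 - 1) • E
        + (u * (δ + 1)^2 - 1) • (E * (R + δ • (E * R))) := by
  have hkey : u * (δ + 1)^2 - 1 = (v - 1) * (δ + 1) := by linear_combination hδ
  have hRER : R * (E * R) = E * (R * R) := by
    rw [← mul_assoc, ← hER, mul_assoc]
  have hERR : (E * R) * R = E * (R * R) := by rw [mul_assoc]
  have hERER : (E * R) * (E * R) = E * (R * R) := by
    rw [mul_assoc, ← mul_assoc R E R, ← hER, ← mul_assoc, ← mul_assoc, hE, mul_assoc]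
  have hER2 : E * (R * R) = u • E + (v - 1) • (E * R) := by
    rw [hquad, mul_add, mul_add, mul_one, mul_smul_comm, mul_smul_comm, hE,
      ← mul_assoc, hE]
    module
  have expand : (R + δ • (E * R)) * (R + δ • (E * R)) =
      R * R + (2 * δ + δ * δ) • (E * (R * R)) := by
    rw [mul_add, add_mul, add_mul, smul_mul_assoc, smul_mul_assoc, mul_smul_comm,
      mul_smul_comm, smul_smul, hRER, hERR, hERER]
    module
  rw [expand, hER2, hquad, mul_add, mul_smul_comm, ← mul_assoc, hE, hkey]
  match_scalars <;> first | ring1 | linear_combination hδ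
end

section
/- Suppose moreover δ ∈ K is such that δ + 1 is invertible in K, and set T := R + δER. Then T² = 1 + (u(δ+1)² − 1)E + (v−1)(δ+1)ET. -/
/-- In an associative unital `K`-algebra `A` with `E² = E`, `ER = RE` and
`R² = 1 + (u−1)E + (v−1)ER`, if `δ + 1` is invertible in `K`, then `T := R + δER`
satisfies `T² = 1 + (u(δ+1)² − 1)E + (v−1)(δ+1)ET`. -/
theorem two_param_bt_quadratic_rescaled
    (K : Type*) [Field K] (u v δ : K)
    (A : Type*) [Ring A] [Algebra K A]
    (E R : A)
    (hE : E * E = E)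
    (hER : E * R = R * E)
    (hquad : R * R = 1 + (u - 1) • E + (v - 1) • (E * R))
    (hδ : IsUnit (δ + 1)) :
    (R + δ • (E * R)) * (R + δ • (E * R)) =
      1 + (u * (δ + 1)^2 - 1) • E
        + ((v - 1) * (δ + 1)) • (E * (R + δ • (E * R))) := by
  have key : E * (R * R) = u • E + (v - 1) • (E * R) := by
    rw [hquad]
    simp only [mul_add, mul_smul_comm, mul_one, ← mul_assoc, hE]
    module
  have h1 : R * (E * R) = E * (R * R) := by rw [← mul_assoc, ← hER, mul_assoc]
  have h2 : (E * R) * (E * R) = E * (R * R) := by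
    rw [mul_assoc, h1, ← mul_assoc, hE]
  have hEE : E * (E * R) = E * R := by rw [← mul_assoc, hE]
  have h3 : E * (E * (R * R)) = E * (R * R) := by rw [← mul_assoc, hE]
  have expand : (R + δ • (E * R)) * (R + δ • (E * R)) =
      R * R + (2 * δ + δ * δ) • (E * (R * R)) := by
    simp only [mul_add, add_mul, mul_smul_comm, smul_mul_assoc, smul_smul, mul_assoc, h1, h3]
    module
  rw [expand, key, hquad]
  simp only [mul_add, mul_smul_comm, hEE]
  module
end

section
/- For any δ ∈ K, the elements T_1 := R_1 + δE_1R_1 and T_2 := R_2 + δE_2R_2 satisfy the braid relation T_1T_2T_1 = T_2T_1T_2. -/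
/-- Given elements `E₁, E₂, R₁, R₂` of an associative unital `K`-algebra
satisfying the defining relations of the two-parameter bt-algebra for a pair of adjacent
indices, for any `δ ∈ K` the elements `T₁ := R₁ + δE₁R₁` and `T₂ := R₂ + δE₂R₂`
satisfy the braid relation `T₁T₂T₁ = T₂T₁T₂`. -/
theorem bt_rescaled_braid_relation
    (K : Type*) [Field K] (u v δ : K)
    (A : Type*) [Ring A] [Algebra K A]
    (E₁ E₂ R₁ R₂ : A)
    (hEE : E₁ * E₂ = E₂ * E₁)
    (hE₁ : E₁ * E₁ = E₁) (hE₂ : E₂ * E₂ = E₂)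
    (hER₁ : E₁ * R₁ = R₁ * E₁) (hER₂ : E₂ * R₂ = R₂ * E₂)
    (hERR₁ : E₁ * (R₂ * R₁) = R₂ * R₁ * E₁)
    (hERR₂ : E₂ * (R₁ * R₂) = R₁ * R₂ * E₂)
    (hEER₁ : E₁ * E₂ * R₁ = E₂ * R₁ * E₂)
    (hEER₁' : E₂ * R₁ * E₂ = R₁ * (E₁ * E₂))
    (hEER₂ : E₁ * E₂ * R₂ = E₁ * R₂ * E₁)
    (hEER₂' : E₁ * R₂ * E₁ = R₂ * (E₁ * E₂))
    (hbraid : R₁ * R₂ * R₁ = R₂ * R₁ * R₂)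
    (hquad₁ : R₁ * R₁ = 1 + (u - 1) • E₁ + (v - 1) • (E₁ * R₁))
    (hquad₂ : R₂ * R₂ = 1 + (u - 1) • E₂ + (v - 1) • (E₂ * R₂)) :
    (R₁ + δ • (E₁ * R₁)) * (R₂ + δ • (E₂ * R₂)) * (R₁ + δ • (E₁ * R₁)) =
      (R₂ + δ • (E₂ * R₂)) * (R₁ + δ • (E₁ * R₁)) * (R₂ + δ • (E₂ * R₂)) := by
  -- canonical atoms (right-associated)
  have key : R₁*(R₂*(R₁*E₁)) = R₁*(R₂*(R₁*E₂)) := by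
    linear_combination (norm := noncomm_ring)
      - hbraid*(E₂) + (R₂)*hERR₂ + hER₂*(R₁*R₂) + (E₂)*hbraid - (R₁)*hERR₁ - hER₁*(R₂*R₁)
      - hbraid*(E₁*E₂) + (R₂*R₁)*hEER₂' + (R₂*R₁)*hEER₂ - (R₁)*hERR₁*(E₂) - hER₁*(R₂*R₁*E₂)
      + (R₂)*hEER₁'*(R₂) + (R₂)*hEER₁*(R₂) + hEER₂'*(R₁*R₂) - hERR₁*(E₁*R₂) - (R₂*R₁)*hE₁*(R₂)
      - (E₁*R₂)*hER₁*(R₂) + hERR₁*(R₂) + (E₁)*hbraid*(E₂) - (E₁*R₂)*hERR₂ - (E₁)*hER₂*(R₁*R₂)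
      - (E₁*E₂)*hbraid + hERR₂*(E₂*R₁) + (R₁*R₂)*hE₂*(R₁) + (E₂*R₁)*hER₂*(R₁) + hEER₁*(R₂*R₁)
      - hERR₂*(R₁) + (E₁)*hbraid
  have a1 : E₁*(R₁*(R₂*R₁)) = R₁*(R₂*(R₁*E₁)) := by
    linear_combination (norm := noncomm_ring) (R₁)*hERR₁ + hER₁*(R₂*R₁)
  have a2 : R₁*(E₂*(R₂*R₁)) = R₁*(R₂*(R₁*E₂)) := by
    linear_combination (norm := noncomm_ring)
      - hbraid*(E₂) + (R₂)*hERR₂ + hER₂*(R₁*R₂) + (E₂)*hbraid - hERR₂*(R₁) + (R₁)*hER₂*(R₁)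
  have a3 : R₁*(R₂*(E₁*R₁)) = R₁*(R₂*(R₁*E₁)) := by
    linear_combination (norm := noncomm_ring) (R₁*R₂)*hER₁
  have b1 : E₁*(R₁*(E₂*(R₂*R₁))) = R₁*(R₂*(R₁*(E₁*E₂))) := by
    linear_combination (norm := noncomm_ring)
      hERR₁*(R₂*E₁) + (E₁)*hbraid*(E₁) + (E₁*R₁*R₂)*hER₁ - hER₁*(R₂*E₁*R₁) + (R₁)*hEER₂*(R₁)
      + hER₁*(E₂*R₂*R₁) - hbraid*(E₁*E₂) + (R₂*R₁)*hEER₂'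
  have b2 : E₁*(R₁*(R₂*(E₁*R₁))) = R₁*(R₂*(R₁*E₁)) := by
    linear_combination (norm := noncomm_ring)
      hERR₁*(R₂*E₁) - (R₂*R₁)*hEER₂ + (E₁)*hbraid*(E₁) - (R₂)*hEER₁'*(R₂) - (R₂)*hEER₁*(R₂)
      - hEER₂'*(R₁*R₂) + hERR₁*(E₁*R₂) + (R₂*R₁)*hE₁*(R₂) + (E₁*R₂)*hER₁*(R₂) - hERR₁*(R₂)
      + (E₁*R₁*R₂)*hER₁ - (E₁)*hbraid + (R₁)*hERR₁ + hER₁*(R₂*R₁)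
  have b3 : R₁*(E₂*(R₂*(E₁*R₁))) = R₁*(R₂*(R₁*(E₁*E₂))) := by
    linear_combination (norm := noncomm_ring)
      (R₁)*hER₂*(E₁*R₁) - (R₁*R₂)*hEE*(R₁) - (R₁)*hEER₂'*(R₁) + hERR₁*(R₂*E₁)
      + (E₁)*hbraid*(E₁) + (E₁*R₁*R₂)*hER₁ - hER₁*(R₂*E₁*R₁) - hbraid*(E₁*E₂) + (R₂*R₁)*hEER₂'
  have c1 : E₁*(R₁*(E₂*(R₂*(E₁*R₁)))) = R₁*(R₂*(R₁*(E₁*E₂))) := by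
    linear_combination (norm := noncomm_ring)
      (E₁*R₁)*hER₂*(E₁*R₁) - (E₁*R₁*R₂)*hEE*(R₁) - (E₁*R₁)*hEER₂'*(R₁) - (E₁*R₁)*hEER₂*(R₁)
      - (E₁)*hER₁*(E₂*R₂*R₁) + hE₁*(R₁*E₂*R₂*R₁) + hERR₁*(R₂*E₁) + (E₁)*hbraid*(E₁)
      + (E₁*R₁*R₂)*hER₁ - hER₁*(R₂*E₁*R₁) + (R₁)*hEER₂*(R₁) + hER₁*(E₂*R₂*R₁)
      - hbraid*(E₁*E₂) + (R₂*R₁)*hEER₂'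
  have d0 : R₂*(R₁*R₂) = R₁*(R₂*R₁) := by
    linear_combination (norm := noncomm_ring) - hbraid
  have d1 : E₂*(R₂*(R₁*R₂)) = R₁*(R₂*(R₁*E₂)) := by
    linear_combination (norm := noncomm_ring) - hbraid*(E₂) + (R₂)*hERR₂ + hER₂*(R₁*R₂)
  have d2 : R₂*(E₁*(R₁*R₂)) = R₁*(R₂*(R₁*E₁)) := by
    linear_combination (norm := noncomm_ring)
      - hERR₁*(R₂) + (R₂)*hER₁*(R₂) + (R₁)*hERR₁ + hER₁*(R₂*R₁) - (E₁)*hbraid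
  have d3 : R₂*(R₁*(E₂*R₂)) = R₁*(R₂*(R₁*E₂)) := by
    linear_combination (norm := noncomm_ring) (R₂*R₁)*hER₂ - hbraid*(E₂)
  have e1 : E₂*(R₂*(E₁*(R₁*R₂))) = R₁*(R₂*(R₁*(E₁*E₂))) := by
    linear_combination (norm := noncomm_ring)
      (R₁)*hERR₁*(E₂) + hER₁*(R₂*R₁*E₂) + hER₂*(E₁*R₁*R₂) - (R₂)*hEE*(R₁*R₂)
      - hEER₂'*(R₁*R₂) - hEER₂*(R₁*R₂) - (E₁)*hbraid*(E₂) + (E₁*R₂)*hERR₂ + (E₁)*hER₂*(R₁*R₂)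
  have e2 : E₂*(R₂*(R₁*(E₂*R₂))) = R₁*(R₂*(R₁*E₂)) := by
    linear_combination (norm := noncomm_ring)
      hER₂*(R₁*E₂*R₂) - (R₂)*hEER₁*(R₂) - hEER₂'*(R₁*R₂) - hEER₂*(R₁*R₂) - (E₁*E₂)*hbraid
      + hERR₂*(E₂*R₁) + (R₁*R₂)*hE₂*(R₁) + (E₂*R₁)*hER₂*(R₁) + hEER₁*(R₂*R₁) - hbraid*(E₂)
      + (R₂)*hERR₂ + hER₂*(R₁*R₂) + (E₂)*hbraid - hERR₂*(R₁)
  have e3 : R₂*(E₁*(R₁*(E₂*R₂))) = R₁*(R₂*(R₁*(E₁*E₂))) := by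
    linear_combination (norm := noncomm_ring)
      (R₂)*hER₁*(E₂*R₂) - hbraid*(E₁*E₂) + (R₂*R₁)*hEER₂' + (R₂*R₁)*hEER₂
  have f1 : E₂*(R₂*(E₁*(R₁*(E₂*R₂)))) = R₁*(R₂*(R₁*(E₁*E₂))) := by
    linear_combination (norm := noncomm_ring)
      hER₂*(E₁*R₁*E₂*R₂) - (R₂)*hEE*(R₁*E₂*R₂) - hEER₂'*(R₁*E₂*R₂) - hEER₂*(R₁*E₂*R₂)
      + (E₁)*hER₂*(R₁*E₂*R₂) - (E₁*R₂)*hEER₁*(R₂) - (E₁)*hEER₂'*(R₁*R₂) - (E₁)*hEER₂*(R₁*R₂)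
      + hE₁*(E₂*R₂*R₁*R₂) + (R₁)*hERR₁*(E₂) + hER₁*(R₂*R₁*E₂) - (E₁)*hbraid*(E₂)
      + (E₁*R₂)*hERR₂ + (E₁)*hER₂*(R₁*R₂)
  have hL : (R₁ + δ • (E₁ * R₁)) * (R₂ + δ • (E₂ * R₂)) * (R₁ + δ • (E₁ * R₁))
      = R₁*(R₂*R₁)
        + δ • (E₁*(R₁*(R₂*R₁)) + R₁*(E₂*(R₂*R₁)) + R₁*(R₂*(E₁*R₁)))
        + (δ*δ) • (E₁*(R₁*(E₂*(R₂*R₁))) + E₁*(R₁*(R₂*(E₁*R₁))) + R₁*(E₂*(R₂*(E₁*R₁))))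
        + (δ*δ*δ) • (E₁*(R₁*(E₂*(R₂*(E₁*R₁))))) := by
    simp only [mul_add, add_mul, smul_mul_assoc, mul_smul_comm, smul_smul, smul_add, mul_assoc]
    module
  have hR : (R₂ + δ • (E₂ * R₂)) * (R₁ + δ • (E₁ * R₁)) * (R₂ + δ • (E₂ * R₂))
      = R₂*(R₁*R₂)
        + δ • (E₂*(R₂*(R₁*R₂)) + R₂*(E₁*(R₁*R₂)) + R₂*(R₁*(E₂*R₂)))
        + (δ*δ) • (E₂*(R₂*(E₁*(R₁*R₂))) + E₂*(R₂*(R₁*(E₂*R₂))) + R₂*(E₁*(R₁*(E₂*R₂))))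
        + (δ*δ*δ) • (E₂*(R₂*(E₁*(R₁*(E₂*R₂))))) := by
    simp only [mul_add, add_mul, smul_mul_assoc, mul_smul_comm, smul_smul, smul_add, mul_assoc]
    module
  rw [hL, hR, c1, b1, b2, b3, a1, a2, a3, f1, e1, e2, e3, d1, d2, d3, d0, key]
end

section
/- For any δ ∈ K, the elements T_1 := R_1 + δE_1R_1 and T_2 := R_2 + δE_2R_2 satisfy E_1T_2T_1 = T_2T_1E_1 and E_2T_1T_2 = T_1T_2E_2. -/
/-- Given elements `E₁, E₂, R₁, R₂` of an associative unital `K`-algebra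
satisfying the defining relations of the two-parameter bt-algebra for a pair of adjacent
indices, for any `δ ∈ K` the elements `T₁ := R₁ + δE₁R₁` and `T₂ := R₂ + δE₂R₂`
satisfy `E₁T₂T₁ = T₂T₁E₁` and `E₂T₁T₂ = T₁T₂E₂`. -/
theorem bt_rescaled_mixed_relation
    (K : Type*) [Field K] (u v δ : K)
    (A : Type*) [Ring A] [Algebra K A]
    (E₁ E₂ R₁ R₂ : A)
    (hEE : E₁ * E₂ = E₂ * E₁)
    (hE₁ : E₁ * E₁ = E₁) (hE₂ : E₂ * E₂ = E₂)
    (hER₁ : E₁ * R₁ = R₁ * E₁) (hER₂ : E₂ * R₂ = R₂ * E₂)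
    (hERR₁ : E₁ * (R₂ * R₁) = R₂ * R₁ * E₁)
    (hERR₂ : E₂ * (R₁ * R₂) = R₁ * R₂ * E₂)
    (hEER₁ : E₁ * E₂ * R₁ = E₂ * R₁ * E₂)
    (hEER₁' : E₂ * R₁ * E₂ = R₁ * (E₁ * E₂))
    (hEER₂ : E₁ * E₂ * R₂ = E₁ * R₂ * E₁)
    (hEER₂' : E₁ * R₂ * E₁ = R₂ * (E₁ * E₂))
    (hbraid : R₁ * R₂ * R₁ = R₂ * R₁ * R₂)
    (hquad₁ : R₁ * R₁ = 1 + (u - 1) • E₁ + (v - 1) • (E₁ * R₁))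
    (hquad₂ : R₂ * R₂ = 1 + (u - 1) • E₂ + (v - 1) • (E₂ * R₂)) :
    E₁ * ((R₂ + δ • (E₂ * R₂)) * (R₁ + δ • (E₁ * R₁))) =
        (R₂ + δ • (E₂ * R₂)) * (R₁ + δ • (E₁ * R₁)) * E₁ ∧
    E₂ * ((R₁ + δ • (E₁ * R₁)) * (R₂ + δ • (E₂ * R₂))) =
        (R₁ + δ • (E₁ * R₁)) * (R₂ + δ • (E₂ * R₂)) * E₂ := by
  have c1 : Commute E₁ (R₂ * R₁) := hERR₁
  have c2 : Commute E₁ E₂ := hEE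
  have d1 : Commute E₂ (R₁ * R₂) := hERR₂
  have d2 : Commute E₂ E₁ := hEE.symm
  have key1 : (R₂ + δ • (E₂ * R₂)) * (R₁ + δ • (E₁ * R₁)) =
      R₂ * R₁ + δ • (E₂ * (R₂ * R₁)) + δ • (R₂ * R₁ * E₁)
        + (δ * δ) • (E₂ * (R₂ * R₁) * E₁) := by
    simp only [mul_add, add_mul, smul_mul_assoc, mul_smul_comm, smul_smul, smul_add, mul_assoc]
    rw [hER₁]
    module
  have key2 : (R₁ + δ • (E₁ * R₁)) * (R₂ + δ • (E₂ * R₂)) =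
      R₁ * R₂ + δ • (E₁ * (R₁ * R₂)) + δ • (R₁ * R₂ * E₂)
        + (δ * δ) • (E₁ * (R₁ * R₂) * E₂) := by
    simp only [mul_add, add_mul, smul_mul_assoc, mul_smul_comm, smul_smul, smul_add, mul_assoc]
    rw [hER₂]
    module
  constructor
  · rw [key1]
    exact (((c1.add_right ((c2.mul_right c1).smul_right δ)).add_right
      ((c1.mul_right (Commute.refl E₁)).smul_right δ)).add_right
      (((c2.mul_right c1).mul_right (Commute.refl E₁)).smul_right (δ * δ)))
  · rw [key2]
    exact (((d1.add_right ((d2.mul_right d1).smul_right δ)).add_right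
      ((d1.mul_right (Commute.refl E₂)).smul_right δ)).add_right
      (((d2.mul_right d1).mul_right (Commute.refl E₂)).smul_right (δ * δ)))
end

section
/- If u is nonzero, then R is invertible in A and R⁻¹ = R + (1−v)u⁻¹E + (u⁻¹ − 1)ER; that is, (R + (1−v)u⁻¹E + (u⁻¹ − 1)ER)·R = R·(R + (1−v)u⁻¹E + (u⁻¹ − 1)ER) = 1. -/
/-- In an associative unital `K`-algebra `A` with `E² = E`, `ER = RE` and
`R² = 1 + (u−1)E + (v−1)ER`, if `u ≠ 0` then `R` is invertible with inverse
`R + (1−v)u⁻¹E + (u⁻¹−1)ER`. -/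
theorem bt_generator_inverse
    (K : Type*) [Field K] (u v : K)
    (A : Type*) [Ring A] [Algebra K A]
    (E R : A)
    (hE : E * E = E)
    (hER : E * R = R * E)
    (hquad : R * R = 1 + (u - 1) • E + (v - 1) • (E * R))
    (hu : u ≠ 0) :
    IsUnit R ∧
    (R + ((1 - v) * u⁻¹) • E + (u⁻¹ - 1) • (E * R)) * R = 1 ∧
    R * (R + ((1 - v) * u⁻¹) • E + (u⁻¹ - 1) • (E * R)) = 1 := by
  have hERR : E * R * R = u • E + (v - 1) • (E * R) := by
    rw [mul_assoc, hquad]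
    rw [mul_add, mul_add, mul_one, mul_smul_comm, mul_smul_comm, ← mul_assoc, hE]
    match_scalars <;> ring
  have h1 : (R + ((1 - v) * u⁻¹) • E + (u⁻¹ - 1) • (E * R)) * R = 1 := by
    have : (R + ((1 - v) * u⁻¹) • E + (u⁻¹ - 1) • (E * R)) * R
        = R * R + ((1 - v) * u⁻¹) • (E * R) + (u⁻¹ - 1) • (E * R * R) := by
      simp [add_mul, smul_mul_assoc]
    rw [this, hquad, hERR]
    match_scalars <;> field_simp <;> ring
  have h2 : R * (R + ((1 - v) * u⁻¹) • E + (u⁻¹ - 1) • (E * R)) = 1 := by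
    have hc : R * (E * R) = E * R * R := by
      rw [← mul_assoc, ← hER]
    have : R * (R + ((1 - v) * u⁻¹) • E + (u⁻¹ - 1) • (E * R))
        = R * R + ((1 - v) * u⁻¹) • (E * R) + (u⁻¹ - 1) • (E * R * R) := by
      rw [mul_add, mul_add, mul_smul_comm, mul_smul_comm, hc, ← hER]
    rw [this, hquad, hERR]
    match_scalars <;> field_simp <;> ring
  exact ⟨⟨⟨R, _, h2, h1⟩, rfl⟩, h1, h2⟩
end

section
/- Let K be a field, let s ∈ K be nonzero, set u := s², let A be an associative unital K-algebra, and let E, T ∈ A satisfy E² = E, ET = TE, and T² = 1 + (u−1)E + (u−1)ET. Then the element V := T + (s⁻¹ − 1)ET satisfies V² = 1 + (s − s⁻¹)EV. -/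
/-- If `s ∈ K` is nonzero, `u := s²`, and `E, T` in an associative unital
`K`-algebra satisfy `E² = E`, `ET = TE` and `T² = 1 + (u−1)E + (u−1)ET`, then
`V := T + (s⁻¹ − 1)ET` satisfies `V² = 1 + (s − s⁻¹)EV`. -/
theorem bt_one_param_change_of_presentation
    (K : Type*) [Field K] (s : K) (hs : s ≠ 0) (u : K) (hu : u = s^2)
    (A : Type*) [Ring A] [Algebra K A]
    (E T : A)
    (hE : E * E = E)
    (hET : E * T = T * E)
    (hquad : T * T = 1 + (u - 1) • E + (u - 1) • (E * T)) :
    (T + (s⁻¹ - 1) • (E * T)) * (T + (s⁻¹ - 1) • (E * T)) =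
      1 + (s - s⁻¹) • (E * (T + (s⁻¹ - 1) • (E * T))) := by
  have hEquad : E * (T * T) = u • E + (u - 1) • (E * T) := by
    rw [hquad, mul_add, mul_add, mul_one, mul_smul_comm, mul_smul_comm, ← mul_assoc, hE]
    rw [hu]
    module
  have h1 : T * (E * T) = u • E + (u - 1) • (E * T) := by
    rw [← mul_assoc, ← hET, mul_assoc, hEquad]
  have h2 : (E * T) * (E * T) = u • E + (u - 1) • (E * T) := by
    rw [mul_assoc, h1, mul_add, mul_smul_comm, mul_smul_comm, ← mul_assoc, hE]
  have h3 : (E * T) * T = u • E + (u - 1) • (E * T) := by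
    rw [mul_assoc, hEquad]
  have h4 : E * (E * T) = E * T := by rw [← mul_assoc, hE]
  simp only [mul_add, add_mul, smul_mul_assoc, mul_smul_comm, smul_smul]
  rw [hquad, h1, h2, h3, h4, hu]
  match_scalars <;> field_simp <;> ring
end

section
/- Suppose moreover u is nonzero and a is a nonzero element of K, let ρ : A → K be a K-linear map with ρ(R) = a, ρ(ER) = a, and ρ(E) = b, and let R⁻¹ = R + (1−v)u⁻¹E + (u⁻¹ − 1)ER be the inverse of R. Then ρ(R⁻¹) = (a + b(1−v))/u = c·a, where c := (a + b(1−v))/(au) is the scaling factor of the Jones recipe; consequently, with π(σ) := √c·R for any √c with (√c)² = c, one has ρ(π(σ)) = ρ(π(σ)⁻¹). -/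
-- Equals `R⁻¹` when `E * E = E`, `E * R = R * E`, `R * R = 1 + (u - 1) • E + (v - 1) • (E * R)` and `u ≠ 0`.
def btInverse {K A : Type*} [Field K] [Ring A] [Algebra K A] (u v : K) (E R : A) : A :=
  R + ((1 - v) * u⁻¹) • E + (u⁻¹ - 1) • (E * R)

theorem map_btInverse {K A : Type*} [Field K] [Ring A] [Algebra K A]
    (ρ : A →ₗ[K] K) (E R : A) (u v a b : K)
    (hρR : ρ R = a) (hρER : ρ (E * R) = a) (hρE : ρ E = b) :
    ρ (btInverse u v E R) = (a + b * (1 - v)) / u := by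
  simp only [btInverse, map_add, map_smul, hρR, hρER, hρE, smul_eq_mul]
  ring

-- Also true for `s = 0`, where `0⁻¹ = 0` makes both sides vanish.
theorem inv_mul_sq_mul {K : Type*} [Field K] (s x : K) : s⁻¹ * (s ^ 2 * x) = s * x := by
  rcases eq_or_ne s 0 with rfl | hs
  · simp
  · field_simp

theorem jones_recipe_scaling_factor_general
    (K : Type*) [Field K] (u v a b : K)
    (A : Type*) [Ring A] [Algebra K A]
    (E R : A)
    (ha : a ≠ 0)
    (ρ : A →ₗ[K] K)
    (hρR : ρ R = a) (hρER : ρ (E * R) = a) (hρE : ρ E = b)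
    (Rinv : A) (hinv : Rinv = R + ((1 - v) * u⁻¹) • E + (u⁻¹ - 1) • (E * R)) :
    ρ Rinv = (a + b * (1 - v)) / u ∧
    ρ Rinv = ((a + b * (1 - v)) / (a * u)) * a ∧
    ∀ sc : K, sc^2 = (a + b * (1 - v)) / (a * u) →
      ρ (sc • R) = ρ (sc⁻¹ • Rinv) := by
  have hval : ρ Rinv = (a + b * (1 - v)) / u :=
    hinv ▸ map_btInverse ρ E R u v a b hρR hρER hρE
  have hscale : ρ Rinv = ((a + b * (1 - v)) / (a * u)) * a := by
    rw [hval, div_mul_eq_mul_div, mul_comm a u, mul_div_mul_right _ _ ha]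
  refine ⟨hval, hscale, fun sc hsc => ?_⟩
  rw [map_smul, map_smul, hρR, hscale, ← hsc, smul_eq_mul, smul_eq_mul, inv_mul_sq_mul]

/-- In an associative unital `K`-algebra with `E² = E`, `ER = RE` and
`R² = 1 + (u−1)E + (v−1)ER`, `u ≠ 0`, `a ≠ 0`, and `ρ : A → K` a `K`-linear map with
`ρ(R) = ρ(ER) = a` and `ρ(E) = b`, the inverse `R⁻¹ = R + (1−v)u⁻¹E + (u⁻¹−1)ER`
satisfies `ρ(R⁻¹) = (a + b(1−v))/u = c·a` where `c = (a + b(1−v))/(au)`; consequently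
for any `√c` with `(√c)² = c`, `ρ(√c·R) = ρ((√c)⁻¹·R⁻¹)`. -/
theorem jones_recipe_scaling_factor
    (K : Type*) [Field K] (u v a b : K)
    (A : Type*) [Ring A] [Algebra K A]
    (E R : A)
    (hE : E * E = E)
    (hER : E * R = R * E)
    (hquad : R * R = 1 + (u - 1) • E + (v - 1) • (E * R))
    (hu : u ≠ 0) (ha : a ≠ 0)
    (ρ : A →ₗ[K] K)
    (hρR : ρ R = a) (hρER : ρ (E * R) = a) (hρE : ρ E = b)
    (Rinv : A) (hinv : Rinv = R + ((1 - v) * u⁻¹) • E + (u⁻¹ - 1) • (E * R)) :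
    ρ Rinv = (a + b * (1 - v)) / u ∧
    ρ Rinv = ((a + b * (1 - v)) / (a * u)) * a ∧
    ∀ sc : K, sc^2 = (a + b * (1 - v)) / (a * u) →
      ρ (sc • R) = ρ (sc⁻¹ • Rinv) :=
  jones_recipe_scaling_factor_general K u v a b A E R ha ρ hρR hρER hρE Rinv hinv
end

section
/- Let L be a field, u, v ∈ L, and n ≥ 2. Then there exists a surjective L-algebra homomorphism from the two-parameter bt-algebra E_n(u,v) onto the two-parameter Hecke algebra H_n(u, v−1), sending each tie generator E_i to 1 and each braid generator R_i to h_i, for all i = 1, …, n−1. -/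
/-- The defining relations of the two-parameter Hecke algebra `H_n(x₁,x₂)`, with
generators `h_1, …, h_{n−1}` indexed by `Fin (n-1)`. -/
inductive HeckeRel (L : Type) [Field L] (x₁ x₂ : L) (n : ℕ) :
    FreeAlgebra L (Fin (n - 1)) → FreeAlgebra L (Fin (n - 1)) → Prop
  | comm (i j : Fin (n - 1)) (h : Nat.dist i.val j.val > 1) :
      HeckeRel L x₁ x₂ n (FreeAlgebra.ι L i * FreeAlgebra.ι L j)
        (FreeAlgebra.ι L j * FreeAlgebra.ι L i)
  | braid (i j : Fin (n - 1)) (h : Nat.dist i.val j.val = 1) :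
      HeckeRel L x₁ x₂ n (FreeAlgebra.ι L i * FreeAlgebra.ι L j * FreeAlgebra.ι L i)
        (FreeAlgebra.ι L j * FreeAlgebra.ι L i * FreeAlgebra.ι L j)
  | quad (i : Fin (n - 1)) :
      HeckeRel L x₁ x₂ n (FreeAlgebra.ι L i * FreeAlgebra.ι L i)
        (algebraMap L _ x₁ + x₂ • FreeAlgebra.ι L i)

/-- The two-parameter Hecke algebra `H_n(x₁,x₂)`. -/
noncomputable abbrev HeckeAlgebra (L : Type) [Field L] (x₁ x₂ : L) (n : ℕ) : Type :=
  RingQuot (HeckeRel L x₁ x₂ n)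

/-- The generator `h_i` of `H_n(x₁,x₂)`. -/
noncomputable def HeckeAlgebra.h (L : Type) [Field L] (x₁ x₂ : L) (n : ℕ)
    (i : Fin (n - 1)) : HeckeAlgebra L x₁ x₂ n :=
  RingQuot.mkAlgHom L (HeckeRel L x₁ x₂ n) (FreeAlgebra.ι L i)

/-- there is a surjective `L`-algebra homomorphism from the two-parameter
bt-algebra `E_n(u,v)` onto the two-parameter Hecke algebra `H_n(u, v−1)` sending each
tie generator `E_i` to `1` and each braid generator `R_i` to `h_i`. -/
theorem bt_onto_hecke
    (L : Type) [Field L] (u v : L) (n : ℕ) (hn : 2 ≤ n) :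
    ∃ φ : BtAlgebra L u v n →ₐ[L] HeckeAlgebra L u (v - 1) n,
      Function.Surjective φ ∧
      (∀ i : Fin (n - 1), φ (BtAlgebra.E L u v n i) = 1) ∧
      (∀ i : Fin (n - 1), φ (BtAlgebra.R L u v n i) = HeckeAlgebra.h L u (v - 1) n i) := by
  classical
  set f : FreeAlgebra L (BtGen n) →ₐ[L] HeckeAlgebra L u (v - 1) n :=
    FreeAlgebra.lift L (fun g => match g with
      | BtGen.R i => HeckeAlgebra.h L u (v - 1) n i
      | BtGen.E _ => 1) with hf
  have hfR : ∀ i, f (btr L n i) = HeckeAlgebra.h L u (v - 1) n i := by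
    intro i; simp [hf, btr]
  have hfE : ∀ i, f (bte L n i) = 1 := by
    intro i; simp [hf, bte]
  have hrel : ∀ ⦃a b⦄, BtRel L u v n a b → f a = f b := by
    intro a b hab
    induction hab with
    | comm_ee i j => simp [hfE]
    | idem_e i => simp [hfE]
    | comm_er_far i j h => simp [hfE, hfR]
    | comm_er i => simp [hfE, hfR]
    | err i j h => simp [hfE, hfR]
    | eer₁ i j h => simp [hfE, hfR]
    | eer₂ i j h => simp [hfE, hfR]
    | comm_rr i j h =>
        rw [map_mul, map_mul, hfR, hfR, HeckeAlgebra.h, HeckeAlgebra.h, ← map_mul, ← map_mul]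
        exact RingQuot.mkAlgHom_rel L (HeckeRel.comm i j h)
    | braid i j h =>
        rw [map_mul, map_mul, map_mul, map_mul, hfR, hfR, HeckeAlgebra.h, HeckeAlgebra.h,
          ← map_mul, ← map_mul, ← map_mul, ← map_mul]
        exact RingQuot.mkAlgHom_rel L (HeckeRel.braid i j h)
    | quad i =>
        simp only [map_mul, map_add, map_smul, map_one, hfR, hfE, one_mul, smul_eq_mul,
          mul_one]
        have h1 : (HeckeAlgebra.h L u (v-1) n i) * (HeckeAlgebra.h L u (v-1) n i)
            = RingQuot.mkAlgHom L (HeckeRel L u (v-1) n)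
                (algebraMap L _ u + (v-1) • FreeAlgebra.ι L i) := by
          rw [HeckeAlgebra.h, ← map_mul]
          exact RingQuot.mkAlgHom_rel L (HeckeRel.quad i)
        rw [h1]
        simp only [map_add, map_smul, AlgHom.commutes]
        rw [← HeckeAlgebra.h]
        rw [Algebra.algebraMap_eq_smul_one]
        module
  set φ : BtAlgebra L u v n →ₐ[L] HeckeAlgebra L u (v - 1) n :=
    RingQuot.liftAlgHom L ⟨f, hrel⟩ with hφdef
  have hφ : ∀ a, φ (RingQuot.mkAlgHom L (BtRel L u v n) a) = f a :=
    RingQuot.liftAlgHom_mkAlgHom_apply L f hrel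
  have hφR : ∀ i, φ (BtAlgebra.R L u v n i) = HeckeAlgebra.h L u (v - 1) n i := by
    intro i; rw [BtAlgebra.R, hφ, hfR]
  have hφE : ∀ i, φ (BtAlgebra.E L u v n i) = 1 := by
    intro i; rw [BtAlgebra.E, hφ, hfE]
  refine ⟨φ, ?_, hφE, hφR⟩
  · -- surjectivity
    set θ : FreeAlgebra L (Fin (n-1)) →ₐ[L] BtAlgebra L u v n :=
      FreeAlgebra.lift L (fun i => BtAlgebra.R L u v n i) with hθ
    have key : (φ.comp θ) = RingQuot.mkAlgHom L (HeckeRel L u (v-1) n) := by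
      apply FreeAlgebra.hom_ext
      funext i
      simp only [Function.comp, AlgHom.coe_comp, hθ, FreeAlgebra.lift_ι_apply]
      rw [hφR]; rfl
    intro z
    obtain ⟨w, hw⟩ := RingQuot.mkAlgHom_surjective L (HeckeRel L u (v-1) n) z
    exact ⟨θ w, by rw [← hw, ← key]; rfl⟩
end

section
/- Suppose moreover u is nonzero, let w ∈ K satisfy w² = (v−1)² + 4u, and set δ := (v−1−2u+w)/(2u) (assume the characteristic of K is not 2). Then u(δ+1)² − (v−1)(δ+1) − 1 = 0, and the element T := R + δER satisfies T² = 1 + ((v−1)(v−1+w)/(2u))·(E + ET). -/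
/-!
Since `E` is an idempotent commuting with `R`, we have `T = (1 + δE)R` and
`(1 + δE)² = 1 + ((δ+1)² − 1)E`, so `T² = R² + ((δ+1)² − 1)·E R²` with
`E R² = uE + (v−1)ER`. Comparing coefficients of `E` and `ER` with those of
`1 + (v−1)(δ+1)(E + ET)`, where `ET = (δ+1)ER`, the identity reduces to
`u(δ+1)² − (v−1)(δ+1) − 1 = 0`; and `δ + 1 = (v−1+w)/(2u)` is a root of this
quadratic by the quadratic formula, its discriminant being `w²`.
-/

section IdempotentCommuting

variable {K A : Type*} [CommRing K] [Ring A] [Algebra K A] {E R : A}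

theorem idem_mul_mul_self_of_quadratic {u v : K} (hE : IsIdempotentElem E)
    (hquad : R * R = 1 + (u - 1) • E + (v - 1) • (E * R)) :
    E * (R * R) = u • E + (v - 1) • (E * R) := by
  have hEER : E * (E * R) = E * R := by rw [← mul_assoc, hE.eq]
  rw [hquad, mul_add, mul_add, mul_one, mul_smul_comm, mul_smul_comm, hE.eq, hEER]
  match_scalars <;> ring

theorem idem_mul_add_smul_idem_mul (hE : IsIdempotentElem E) (δ : K) :
    E * (R + δ • (E * R)) = (δ + 1) • (E * R) := by
  rw [mul_add, mul_smul_comm, ← mul_assoc, hE.eq, add_smul, one_smul, add_comm]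

theorem add_smul_idem_mul_mul_self (hE : IsIdempotentElem E) (hER : Commute E R) (δ : K) :
    (R + δ • (E * R)) * (R + δ • (E * R)) = R * R + ((δ + 1) ^ 2 - 1) • (E * (R * R)) := by
  have hRER : R * (E * R) = E * (R * R) := by rw [← mul_assoc, ← hER.eq, mul_assoc]
  have hERER : (E * R) * (E * R) = E * (R * R) := by rw [mul_assoc, hRER, ← mul_assoc, hE.eq]
  simp only [mul_add, add_mul, mul_smul_comm, smul_mul_assoc, hRER, hERER,
    mul_assoc]
  match_scalars <;> ring

theorem add_smul_idem_mul_mul_self_of_root {u v δ : K} (hE : IsIdempotentElem E)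
    (hER : Commute E R)
    (hquad : R * R = 1 + (u - 1) • E + (v - 1) • (E * R))
    (hroot : u * (δ + 1) ^ 2 - (v - 1) * (δ + 1) - 1 = 0) :
    (R + δ • (E * R)) * (R + δ • (E * R)) =
      1 + ((v - 1) * (δ + 1)) • (E + E * (R + δ • (E * R))) := by
  rw [add_smul_idem_mul_mul_self hE hER, idem_mul_mul_self_of_quadratic hE hquad,
    idem_mul_add_smul_idem_mul hE, hquad]
  match_scalars
  · ring
  · linear_combination hroot
  · ring

end IdempotentCommuting

/-- In an associative unital `K`-algebra with `E² = E`, `ER = RE` and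
`R² = 1 + (u−1)E + (v−1)ER`, if `char K ≠ 2`, `u ≠ 0`, `w² = (v−1)² + 4u` and
`δ := (v−1−2u+w)/(2u)`, then `δ` is a root of `u(z+1)² − (v−1)(z+1) − 1` and
`T := R + δER` satisfies `T² = 1 + ((v−1)(v−1+w)/(2u))(E + ET)`. -/
theorem bt_explicit_root_quadratic
    (K : Type*) [Field K] (u v : K)
    (A : Type*) [Ring A] [Algebra K A]
    (E R : A)
    (hE : E * E = E)
    (hER : E * R = R * E)
    (hquad : R * R = 1 + (u - 1) • E + (v - 1) • (E * R))
    (hchar : (2 : K) ≠ 0)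
    (hu : u ≠ 0)
    (w : K) (hw : w^2 = (v - 1)^2 + 4 * u)
    (δ : K) (hδ : δ = (v - 1 - 2 * u + w) / (2 * u)) :
    u * (δ + 1)^2 - (v - 1) * (δ + 1) - 1 = 0 ∧
    (R + δ • (E * R)) * (R + δ • (E * R)) =
      1 + ((v - 1) * (v - 1 + w) / (2 * u)) •
        (E + E * (R + δ • (E * R))) := by
  have : NeZero (2 : K) := ⟨hchar⟩
  have hδ1 : δ + 1 = (v - 1 + w) / (2 * u) := by
    rw [hδ]
    field_simp
    ring
  have hroot : u * (δ + 1) ^ 2 - (v - 1) * (δ + 1) - 1 = 0 := by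
    have hdiscrim : discrim u (-(v - 1)) (-1) = w * w := by
      rw [discrim]
      linear_combination -hw
    have := (quadratic_eq_zero_iff hu hdiscrim (δ + 1)).2 (.inl (by rw [hδ1, neg_neg]))
    linear_combination this
  refine ⟨hroot, ?_⟩
  rw [show (v - 1) * (v - 1 + w) / (2 * u) = (v - 1) * (δ + 1) by rw [hδ1]; ring]
  exact add_smul_idem_mul_mul_self_of_root hE hER hquad hroot
end

section
/- Suppose moreover v = u and u is nonzero, so that R² = 1 + (u−1)E + (u−1)ER. Then both δ = 0 and δ = −(u+1)/u are roots of the quadratic u(z+1)² − (u−1)(z+1) − 1, and for δ = −(u+1)/u the element T := R + δER satisfies T² = 1 + ((1−u)/u)·(E + ET). -/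
/-- In an associative unital `K`-algebra with `E² = E`, `ER = RE` and
`R² = 1 + (u−1)E + (v−1)ER`, suppose `v = u` and `u ≠ 0`, so that
`R² = 1 + (u−1)E + (u−1)ER`. Then `δ = 0` and `δ = −(u+1)/u` are both roots of
`u(z+1)² − (u−1)(z+1) − 1`, and for `δ = −(u+1)/u` the element `T := R + δER`
satisfies `T² = 1 + ((1−u)/u)(E + ET)`. -/
theorem bt_v_eq_u_two_roots
    (K : Type*) [Field K] (u v : K)
    (A : Type*) [Ring A] [Algebra K A]
    (E R : A)
    (hE : E * E = E)
    (hER : E * R = R * E)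
    (hquad : R * R = 1 + (u - 1) • E + (v - 1) • (E * R))
    (hv : v = u) (hu : u ≠ 0) :
    (u * ((0 : K) + 1)^2 - (u - 1) * ((0 : K) + 1) - 1 = 0) ∧
    (u * ((-(u + 1) / u) + 1)^2 - (u - 1) * ((-(u + 1) / u) + 1) - 1 = 0) ∧
    (R + (-(u + 1) / u) • (E * R)) * (R + (-(u + 1) / u) • (E * R)) =
      1 + ((1 - u) / u) • (E + E * (R + (-(u + 1) / u) • (E * R))) := by
  rw [hv] at hquad
  refine ⟨by ring, by field_simp; ring, ?_⟩
  have h1 : E * (E * R) = E * R := by rw [← mul_assoc, hE]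
  have hErr : E * (R * R) = u • E + (u - 1) • (E * R) := by
    rw [hquad, mul_add, mul_add, mul_one, mul_smul_comm, mul_smul_comm, hE, h1]
    match_scalars <;> ring
  have h2 : (E * R) * R = u • E + (u - 1) • (E * R) := by rw [mul_assoc, hErr]
  have h3 : R * (E * R) = u • E + (u - 1) • (E * R) := by
    rw [← mul_assoc, ← hER, mul_assoc, hErr]
  have h4 : (E * R) * (E * R) = u • E + (u - 1) • (E * R) := by
    rw [mul_assoc, h3, mul_add, mul_smul_comm, mul_smul_comm, hE, h1]
  rw [mul_add, add_mul, add_mul, mul_smul_comm, mul_smul_comm, smul_mul_assoc,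
    smul_mul_assoc, hquad, h2, h3, h4, mul_add, mul_smul_comm, h1]
  match_scalars <;> field_simp <;> ring
end
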